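/- arXiv:0712.0407 — 2 statements merged into one kernel-verified Lean document; each statement's English description precedes it below -/
import Mathlib

section
/- Let γ ∈ (0,1) and ω_γ be the harmonic measure of the arc {ζ ∈ T : |1−ζ| ≤ γ} with respect to the unit disk. Then for every z ∈ D with |1−z| ≤ γ one has ω_γ(z) ≥ 1/4. -/
open Complex Real

/-- The harmonic measure (at `z` in the unit disk) of the symmetric arc
`{ζ ∈ T : |1−ζ| ≤ γ}`, expressed as the Poisson integral of the indicator of the arc. -/
noncomputable def omegaGamma (γ : ℝ) (z : ℂ) : ℝ :=
  (1 / (2 * Real.pi)) * ∫ t in (0:ℝ)..(2 * Real.pi),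
    (if ‖1 - Complex.exp (t * Complex.I)‖ ≤ γ then
      (1 - ‖z‖ ^ 2) / ‖Complex.exp (t * Complex.I) - z‖ ^ 2
    else 0)

/-!
Write `z = r e^{iθ}` and `k = (1 + r) / (1 - r)`. The Poisson kernel has the primitive
`2 arctan (k tan ((t - θ) / 2))`, so restricting the Poisson integral to the sub-arc `[-a, a]`
with `cos a = 1 - γ² / 2` gives `ω_γ(z) ≥ (arctan x + arctan y) / π`, where
`x = k tan ((a + θ) / 2)` and `y = k tan ((a - θ) / 2)`. Now `arctan x + arctan y ≥ π / 4` as soon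
as `x + y ≥ 0` and `(1 + x)(1 + y) ≥ 2`; after clearing denominators the latter reads
`2 (1 - r²) sin a + 4 r cos θ - 2 (1 + r²) cos a ≥ 0`, which follows from
`|1 - z| ≤ |1 - e^{ia}|` together with `sin a + cos a ≥ 1` on `[0, π/2]`.
-/

lemma norm_exp_mul_I_sub_sq (z : ℂ) (t : ℝ) :
    ‖exp (t * I) - z‖ ^ 2 = 1 + ‖z‖ ^ 2 - 2 * ‖z‖ * Real.cos (t - arg z) := by
  rw [Complex.sq_norm, normSq_apply, sub_re, sub_im, exp_ofReal_mul_I_re, exp_ofReal_mul_I_im,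
    ← norm_mul_cos_arg z, ← norm_mul_sin_arg z, Real.cos_sub]
  linear_combination Real.sin_sq_add_cos_sq t + ‖z‖ ^ 2 * Real.sin_sq_add_cos_sq (arg z)

lemma norm_one_sub_exp_mul_I_sq (t : ℝ) : ‖1 - exp (t * I)‖ ^ 2 = 2 - 2 * Real.cos t := by
  rw [norm_sub_rev, norm_exp_mul_I_sub_sq]
  simp only [norm_one, arg_one, sub_zero]
  ring

lemma norm_one_sub_exp_mul_I_le {a t : ℝ} (ha : a ≤ π) (ht : |t| ≤ a) :
    ‖1 - exp (t * I)‖ ≤ ‖1 - exp (a * I)‖ := by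
  have hcos : Real.cos a ≤ Real.cos t := by
    rw [← Real.cos_abs t]
    exact Real.cos_le_cos_of_nonneg_of_le_pi (abs_nonneg t) ha ht
  refine (pow_le_pow_iff_left₀ (norm_nonneg _) (norm_nonneg _) two_ne_zero).mp ?_
  rw [norm_one_sub_exp_mul_I_sq, norm_one_sub_exp_mul_I_sq]
  linarith

lemma poissonKernel_zero_exp_mul_I (z : ℂ) (t : ℝ) :
    poissonKernel 0 z (exp (t * I)) = (1 - ‖z‖ ^ 2) / ‖exp (t * I) - z‖ ^ 2 := by
  simp [poissonKernel_def]

lemma continuous_poissonKernel_zero_exp_mul_I {z : ℂ} (hz : ‖z‖ ≠ 1) :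
    Continuous fun t : ℝ => poissonKernel 0 z (exp (t * I)) := by
  simp only [poissonKernel_zero_exp_mul_I]
  refine continuous_const.div (by fun_prop) fun t => pow_ne_zero 2 (norm_ne_zero_iff.2 ?_)
  rw [sub_ne_zero]
  rintro rfl
  exact hz (norm_exp_ofReal_mul_I t)

lemma one_add_sq_sub_two_mul_cos (r u : ℝ) :
    1 + r ^ 2 - 2 * r * Real.cos u
      = (1 - r) ^ 2 * Real.cos (u / 2) ^ 2 + (1 + r) ^ 2 * Real.sin (u / 2) ^ 2 := by
  have h := Real.cos_two_mul' (u / 2)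
  rw [mul_div_cancel₀ u two_ne_zero] at h
  rw [h]
  linear_combination -(1 + r ^ 2) * Real.sin_sq_add_cos_sq (u / 2)

noncomputable def poissonPrimitive (z : ℂ) (t : ℝ) : ℝ :=
  2 * Real.arctan ((1 + ‖z‖) / (1 - ‖z‖) * Real.tan ((t - arg z) / 2))

lemma hasDerivAt_poissonPrimitive {z : ℂ} {t : ℝ} (hz : ‖z‖ ≠ 1)
    (ht : Real.cos ((t - arg z) / 2) ≠ 0) :
    HasDerivAt (poissonPrimitive z) (poissonKernel 0 z (exp (t * I))) t := by
  have hhalf : HasDerivAt (fun s : ℝ => (s - arg z) / 2) (1 / 2) t := by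
    simpa using ((hasDerivAt_id t).sub_const (arg z)).div_const 2
  refine ((((Real.hasDerivAt_tan ht).comp t hhalf).const_mul
    ((1 + ‖z‖) / (1 - ‖z‖))).arctan.const_mul 2).congr_deriv ?_
  have h1z : 1 - ‖z‖ ≠ 0 := sub_ne_zero.2 hz.symm
  rw [poissonKernel_zero_exp_mul_I, norm_exp_mul_I_sub_sq, one_add_sq_sub_two_mul_cos,
    Function.comp_apply, Real.tan_eq_sin_div_cos]
  field_simp
  ring

lemma integral_poissonKernel_symm {z : ℂ} {a : ℝ} (hz : ‖z‖ ≠ 1) (ha : 0 ≤ a)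
    (haz : a + |arg z| < π) :
    ∫ t in -a..a, poissonKernel 0 z (exp (t * I))
      = 2 * (Real.arctan ((1 + ‖z‖) / (1 - ‖z‖) * Real.tan ((a + arg z) / 2))
        + Real.arctan ((1 + ‖z‖) / (1 - ‖z‖) * Real.tan ((a - arg z) / 2))) := by
  have hcos : ∀ t ∈ Set.uIcc (-a) a, Real.cos ((t - arg z) / 2) ≠ 0 := by
    intro t ht
    rw [Set.uIcc_of_le (by linarith)] at ht
    exact (Real.cos_pos_of_mem_Ioo ⟨by linarith [ht.1, le_abs_self (arg z)],
      by linarith [ht.2, neg_abs_le (arg z)]⟩).ne'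
  rw [intervalIntegral.integral_eq_sub_of_hasDerivAt
    (fun t ht => hasDerivAt_poissonPrimitive hz (hcos t ht))
    ((continuous_poissonKernel_zero_exp_mul_I hz).intervalIntegrable _ _),
    poissonPrimitive, poissonPrimitive, show (-a - arg z) / 2 = -((a + arg z) / 2) by ring,
    Real.tan_neg, mul_neg, Real.arctan_neg]
  ring

lemma integral_poissonKernel_le_omegaGamma {γ a : ℝ} {z : ℂ} (hz : ‖z‖ < 1) (ha : 0 ≤ a)
    (haπ : a ≤ π) (harc : ∀ t ∈ Set.Icc (-a) a, ‖1 - exp (t * I)‖ ≤ γ) :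
    1 / (2 * π) * ∫ t in -a..a, poissonKernel 0 z (exp (t * I)) ≤ omegaGamma γ z := by
  set S := {t : ℝ | ‖1 - exp (t * I)‖ ≤ γ}
  set f : ℝ → ℝ := fun t =>
    if ‖1 - exp (t * I)‖ ≤ γ then (1 - ‖z‖ ^ 2) / ‖exp (t * I) - z‖ ^ 2 else 0
  have hf : f = S.indicator fun t => poissonKernel 0 z (exp (t * I)) := by
    ext t
    simp only [f, S, Set.indicator_apply, Set.mem_ofPred_eq, poissonKernel_zero_exp_mul_I]
  have hS : MeasurableSet S := (isClosed_le (by fun_prop) continuous_const).measurableSet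
  have hf_int : IntervalIntegrable f MeasureTheory.volume (-π) π := by
    rw [hf, intervalIntegrable_iff]
    exact (continuous_poissonKernel_zero_exp_mul_I hz.ne).integrableOn_uIoc.indicator hS
  have hf_nonneg : 0 ≤ f := by
    have : 0 ≤ 1 - ‖z‖ ^ 2 := by nlinarith [norm_nonneg z]
    intro t
    simp only [f]
    split_ifs <;> positivity
  have hf_per : Function.Periodic f (2 * π) := by
    intro t
    simp only [f, ofReal_add, ofReal_mul, ofReal_ofNat, exp_mul_I_periodic _]
  have hf_arc : ∀ t ∈ Set.uIcc (-a) a, poissonKernel 0 z (exp (t * I)) = f t := by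
    intro t ht
    rw [Set.uIcc_of_le (by linarith)] at ht
    rw [hf, Set.indicator_of_mem (s := S) (harc t ht)]
  calc 1 / (2 * π) * ∫ t in -a..a, poissonKernel 0 z (exp (t * I))
      = 1 / (2 * π) * ∫ t in -a..a, f t := by rw [intervalIntegral.integral_congr hf_arc]
    _ ≤ 1 / (2 * π) * ∫ t in -π..π, f t := by
      gcongr
      exact intervalIntegral.integral_mono_interval (by linarith) (by linarith) (by linarith)
        (Filter.Eventually.of_forall hf_nonneg) hf_int
    _ = omegaGamma γ z := by
      rw [omegaGamma]
      congr 1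
      have h := hf_per.intervalIntegral_add_eq (-π) 0
      rw [show -π + 2 * π = π by ring, zero_add] at h
      exact h

lemma pi_div_four_le_arctan_add_arctan {x y : ℝ} (hxy : 0 ≤ x + y) (h : 1 ≤ x + y + x * y) :
    π / 4 ≤ Real.arctan x + Real.arctan y := by
  have hx : 0 < 1 + x := by
    by_contra! hx
    nlinarith
  have hy : (1 - x) / (1 + x) ≤ y := by
    rw [div_le_iff₀ hx]
    nlinarith
  have hlt : (1 - x) / (1 + x) * x < 1 := by
    rw [div_mul_eq_mul_div, div_lt_one hx]
    nlinarith [sq_nonneg x]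
  have hquarter : Real.arctan ((1 - x) / (1 + x)) + Real.arctan x = π / 4 := by
    rw [Real.arctan_add hlt, ← Real.arctan_one]
    congr 1
    rw [div_eq_one_iff_eq (sub_pos.2 hlt).ne']
    field_simp
    ring
  linarith [Real.arctan_strictMono.monotone hy]

lemma pi_div_four_le_arctan_add_arctan_tan {r θ a : ℝ} (hr0 : 0 ≤ r) (hr1 : r < 1) (ha0 : 0 ≤ a)
    (ha : a ≤ π / 2) (hθ : |θ| < π / 2) (h : 1 + r ^ 2 - 2 * r * Real.cos θ ≤ 2 - 2 * Real.cos a) :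
    π / 4 ≤ Real.arctan ((1 + r) / (1 - r) * Real.tan ((a + θ) / 2))
      + Real.arctan ((1 + r) / (1 - r) * Real.tan ((a - θ) / 2)) := by
  obtain ⟨hθ1, hθ2⟩ := abs_lt.1 hθ
  have h1r : 0 < 1 - r := by linarith
  have hcp : 0 < Real.cos ((a + θ) / 2) := Real.cos_pos_of_mem_Ioo ⟨by linarith, by linarith⟩
  have hcm : 0 < Real.cos ((a - θ) / 2) := Real.cos_pos_of_mem_Ioo ⟨by linarith, by linarith⟩
  have hsin_a : Real.sin a = Real.sin ((a + θ) / 2) * Real.cos ((a - θ) / 2)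
      + Real.cos ((a + θ) / 2) * Real.sin ((a - θ) / 2) := by
    rw [← Real.sin_add]; ring_nf
  have hcos_a : Real.cos a = Real.cos ((a + θ) / 2) * Real.cos ((a - θ) / 2)
      - Real.sin ((a + θ) / 2) * Real.sin ((a - θ) / 2) := by
    rw [← Real.cos_add]; ring_nf
  have hcos_θ : Real.cos θ = Real.cos ((a + θ) / 2) * Real.cos ((a - θ) / 2)
      + Real.sin ((a + θ) / 2) * Real.sin ((a - θ) / 2) := by
    rw [← Real.cos_sub]; ring_nf
  have hsa : 0 ≤ Real.sin a := Real.sin_nonneg_of_nonneg_of_le_pi ha0 (by linarith [pi_pos])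
  have hca : 0 ≤ Real.cos a := Real.cos_nonneg_of_mem_Icc ⟨by linarith [pi_pos], ha⟩
  have hsc : 1 ≤ Real.sin a + Real.cos a := by nlinarith [Real.sin_sq_add_cos_sq a]
  have hkey : 0 ≤ 2 * (1 - r ^ 2) * Real.sin a + 4 * r * Real.cos θ
      - 2 * (1 + r ^ 2) * Real.cos a := by
    nlinarith [mul_nonneg (by nlinarith : (0 : ℝ) ≤ 1 - r ^ 2) (sub_nonneg.2 hsc)]
  apply pi_div_four_le_arctan_add_arctan
  · have hsum : (1 + r) / (1 - r) * Real.tan ((a + θ) / 2)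
        + (1 + r) / (1 - r) * Real.tan ((a - θ) / 2)
        = (1 + r) / (1 - r) * Real.sin a / (Real.cos ((a + θ) / 2) * Real.cos ((a - θ) / 2)) := by
      rw [Real.tan_eq_sin_div_cos, Real.tan_eq_sin_div_cos, hsin_a]
      field_simp
    rw [hsum]
    positivity
  · rw [← sub_nonneg]
    have hprod : (1 + r) / (1 - r) * Real.tan ((a + θ) / 2)
        + (1 + r) / (1 - r) * Real.tan ((a - θ) / 2)
        + (1 + r) / (1 - r) * Real.tan ((a + θ) / 2) * ((1 + r) / (1 - r) * Real.tan ((a - θ) / 2))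
        - 1
        = (2 * (1 - r ^ 2) * Real.sin a + 4 * r * Real.cos θ - 2 * (1 + r ^ 2) * Real.cos a)
          / (2 * (1 - r) ^ 2 * (Real.cos ((a + θ) / 2) * Real.cos ((a - θ) / 2))) := by
      rw [Real.tan_eq_sin_div_cos, Real.tan_eq_sin_div_cos, hsin_a, hcos_a, hcos_θ]
      field_simp
      ring
    rw [hprod]
    positivity

theorem omegaGamma_ge_quarter_general (γ : ℝ) (hγ1 : γ < 1)
    (z : ℂ) (hzD : ‖z‖ < 1) (hz : ‖1 - z‖ ≤ γ) :
    (1 / 4 : ℝ) ≤ omegaGamma γ z := by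
  have hγ : 0 ≤ γ := (norm_nonneg _).trans hz
  set a := Real.arccos (1 - γ ^ 2 / 2)
  have ha0 : 0 ≤ a := Real.arccos_nonneg _
  have ha : a ≤ π / 2 := Real.arccos_le_pi_div_two.2 (by nlinarith)
  have hchord : ‖1 - exp (a * I)‖ = γ := by
    refine (pow_left_inj₀ (norm_nonneg _) hγ two_ne_zero).1 ?_
    rw [norm_one_sub_exp_mul_I_sq, Real.cos_arccos (by nlinarith) (by nlinarith)]
    ring
  have harc : ∀ t ∈ Set.Icc (-a) a, ‖1 - exp (t * I)‖ ≤ γ := fun t ht =>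
    hchord ▸ norm_one_sub_exp_mul_I_le (by linarith [pi_pos]) (abs_le.2 ht)
  have hpolar : 1 + ‖z‖ ^ 2 - 2 * ‖z‖ * Real.cos (arg z) ≤ 2 - 2 * Real.cos a := by
    have h := norm_exp_mul_I_sub_sq z 0
    simp only [ofReal_zero, zero_mul, Complex.exp_zero, zero_sub, Real.cos_neg] at h
    rw [← h, ← norm_one_sub_exp_mul_I_sq, hchord]
    exact pow_le_pow_left₀ (norm_nonneg _) hz 2
  have harg : |arg z| < π / 2 := by
    refine abs_arg_lt_pi_div_two_iff.2 (Or.inl ?_)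
    have := (abs_re_le_norm (1 - z)).trans hz
    rw [sub_re, one_re] at this
    linarith [le_abs_self (1 - z.re)]
  calc (1 / 4 : ℝ) = 1 / (2 * π) * (2 * (π / 4)) := by field_simp
    _ ≤ 1 / (2 * π) * ∫ t in -a..a, poissonKernel 0 z (exp (t * I)) := by
      rw [integral_poissonKernel_symm hzD.ne ha0 (by linarith)]
      gcongr
      exact pi_div_four_le_arctan_add_arctan_tan (norm_nonneg z) hzD ha0 ha harg hpolar
    _ ≤ omegaGamma γ z := integral_poissonKernel_le_omegaGamma hzD ha0 (by linarith [pi_pos]) harc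

/-- For `0 < γ < 1` and any `z` in the unit disk with `|1−z| ≤ γ`,
the harmonic measure of the arc `{ζ ∈ T : |1−ζ| ≤ γ}` satisfies `ω_γ(z) ≥ 1/4`. -/
theorem omegaGamma_ge_quarter (γ : ℝ) (hγ0 : 0 < γ) (hγ1 : γ < 1)
    (z : ℂ) (hzD : ‖z‖ < 1) (hz : ‖1 - z‖ ≤ γ) :
    (1 / 4 : ℝ) ≤ omegaGamma γ z :=
  omegaGamma_ge_quarter_general γ hγ1 z hzD hz
end

section
/- Let N ≥ 1 be an integer, M = 200N, and 0 < γ < 1/(500N). Let λ ∈ D with |1−λ| ≥ Mγ and let b_λ(z) = (z−λ)/(1−conj(λ)z). Then for every z ∈ D with |1−z| = γ one has log(1/|b_λ(z)|) ≤ (1/(4Nγ))·log(1/|λ|). -/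
open Complex ComplexConjugate

/-!
With `A = ‖z - λ‖` and `D = ‖1 - conj λ * z‖`, the identity `D² - A² = (1 - ‖z‖²)(1 - ‖λ‖²)` and
`log x ≤ x - 1` give
`log (1 / ‖b_λ(z)‖) = log (D / A) ≤ (D² - A²) / (2A²) ≤ 2 (1 - ‖z‖)(1 - ‖λ‖) / A²`.
On the circle `‖1 - z‖ = γ` we have `1 - ‖z‖ ≤ γ` and `A ≥ (M - 1)γ ≥ 199Nγ`, while
`1 - ‖λ‖ ≤ log (1 / ‖λ‖)`; so the left side is at most `2 log (1 / ‖λ‖) / (199² N² γ)`,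
which is below the claimed bound because `8 ≤ 199² N`.
-/

theorem Complex.sq_norm_one_sub_conj_mul_sub_sq_norm_sub (l z : ℂ) :
    ‖1 - conj l * z‖ ^ 2 - ‖z - l‖ ^ 2 = (1 - ‖z‖ ^ 2) * (1 - ‖l‖ ^ 2) := by
  simp only [Complex.sq_norm, normSq_apply, sub_re, sub_im, mul_re, mul_im, conj_re, conj_im,
    one_re, one_im]
  ring

theorem Real.log_div_le_sq_sub_sq_div {a d : ℝ} (ha : 0 < a) (hd : 0 < d) :
    Real.log (d / a) ≤ (d ^ 2 - a ^ 2) / (2 * a ^ 2) :=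
  calc Real.log (d / a) = Real.log ((d / a) ^ 2) / 2 := by rw [Real.log_pow]; push_cast; ring
    _ ≤ ((d / a) ^ 2 - 1) / 2 := by gcongr; exact Real.log_le_sub_one_of_pos (by positivity)
    _ = (d ^ 2 - a ^ 2) / (2 * a ^ 2) := by field_simp

theorem Complex.log_inv_norm_blaschke_le {l z : ℂ} (hl : ‖l‖ < 1) (hz : ‖z‖ < 1) (hzl : z ≠ l) :
    Real.log (1 / ‖(z - l) / (1 - conj l * z)‖) ≤
      2 * (1 - ‖z‖) * (1 - ‖l‖) / ‖z - l‖ ^ 2 := by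
  have hA : 0 < ‖z - l‖ := norm_pos_iff.2 (sub_ne_zero.2 hzl)
  have hD : 0 < ‖1 - conj l * z‖ := by
    have hlz : ‖conj l * z‖ < 1 := by
      rw [norm_mul, norm_conj]
      nlinarith [norm_nonneg l, norm_nonneg z]
    have := norm_sub_norm_le (1 : ℂ) (conj l * z)
    rw [norm_one] at this
    linarith
  -- `1 - x ^ 2 ≤ 2 * (1 - x)` is `0 ≤ (1 - x) ^ 2`
  have hfactor : (1 - ‖z‖ ^ 2) * (1 - ‖l‖ ^ 2) ≤ (2 * (1 - ‖z‖)) * (2 * (1 - ‖l‖)) :=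
    mul_le_mul (by nlinarith) (by nlinarith) (by nlinarith [norm_nonneg l])
      (by linarith)
  rw [norm_div, one_div_div]
  calc Real.log (‖1 - conj l * z‖ / ‖z - l‖)
      ≤ (‖1 - conj l * z‖ ^ 2 - ‖z - l‖ ^ 2) / (2 * ‖z - l‖ ^ 2) :=
        Real.log_div_le_sq_sub_sq_div hA hD
    _ = (1 - ‖z‖ ^ 2) * (1 - ‖l‖ ^ 2) / (2 * ‖z - l‖ ^ 2) := by
        rw [Complex.sq_norm_one_sub_conj_mul_sub_sq_norm_sub]
    _ ≤ (2 * (1 - ‖z‖)) * (2 * (1 - ‖l‖)) / (2 * ‖z - l‖ ^ 2) := by gcongr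
    _ = 2 * (1 - ‖z‖) * (1 - ‖l‖) / ‖z - l‖ ^ 2 := by field_simp

theorem blaschke_log_bound_well_separated_general (N : ℕ) (hN : 1 ≤ N) (γ : ℝ)
    (hγ0 : 0 < γ) (l : ℂ) (hl : ‖l‖ < 1)
    (hl0 : l ≠ 0) (hsep : 200 * N * γ ≤ ‖1 - l‖)
    (z : ℂ) (hzD : ‖z‖ < 1) (hz : ‖1 - z‖ = γ) :
    Real.log (1 / ‖(z - l) / (1 - (starRingEnd ℂ) l * z)‖) ≤
      (1 / (4 * N * γ)) * Real.log (1 / ‖l‖) := by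
  have hN1 : (1 : ℝ) ≤ N := by exact_mod_cast hN
  have hz_near : 1 - ‖z‖ ≤ γ := by simpa [hz] using norm_sub_norm_le (1 : ℂ) z
  have hzl : 199 * N * γ ≤ ‖z - l‖ := by
    have := norm_sub_le_norm_sub_add_norm_sub (1 : ℂ) z l
    nlinarith
  have hzl0 : z ≠ l := fun h => by
    rw [h, sub_self, norm_zero] at hzl
    nlinarith
  have hl_log : 1 - ‖l‖ ≤ Real.log (1 / ‖l‖) := by
    simpa using Real.one_sub_inv_le_log_of_pos (inv_pos.2 (norm_pos_iff.2 hl0))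
  have hL : 0 ≤ Real.log (1 / ‖l‖) := by linarith
  calc _ ≤ 2 * (1 - ‖z‖) * (1 - ‖l‖) / ‖z - l‖ ^ 2 :=
        Complex.log_inv_norm_blaschke_le hl hzD hzl0
    _ ≤ 2 * γ * Real.log (1 / ‖l‖) / (199 * N * γ) ^ 2 := by gcongr
    _ ≤ (1 / (4 * N * γ)) * Real.log (1 / ‖l‖) := by
        rw [div_le_iff₀ (by positivity)]
        field_simp
        nlinarith

/-- Lemma 1: let `N ≥ 1`, `M = 200N`, `0 < γ < 1/(500N)`; if `λ ∈ D`, `λ ≠ 0`,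
`|1−λ| ≥ Mγ`, then for every `z ∈ D` with `|1−z| = γ`,
`log(1/|b_λ(z)|) ≤ (1/(4Nγ))·log(1/|λ|)`. -/
theorem blaschke_log_bound_well_separated (N : ℕ) (hN : 1 ≤ N) (γ : ℝ)
    (hγ0 : 0 < γ) (hγ1 : γ < 1 / (500 * N)) (l : ℂ) (hl : ‖l‖ < 1)
    (hl0 : l ≠ 0) (hsep : 200 * N * γ ≤ ‖1 - l‖)
    (z : ℂ) (hzD : ‖z‖ < 1) (hz : ‖1 - z‖ = γ) :
    Real.log (1 / ‖(z - l) / (1 - (starRingEnd ℂ) l * z)‖) ≤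
      (1 / (4 * N * γ)) * Real.log (1 / ‖l‖) :=
  blaschke_log_bound_well_separated_general N hN γ hγ0 l hl hl0 hsep z hzD hz
end
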